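/- arXiv:2011.14119 — 3 statements merged into one kernel-verified Lean document; each statement's English description precedes it below -/
import Mathlib

section
/- Let n ≥ q ≥ 2 be integers with q ≤ n - 1 (so n > q) and n + q odd. Then Σ_{k=0}^{⌊(n-1)/2⌋} (-1)^k * C(n,k) * (n-2k)^{q-1} = 0. -/
/-!
Over all `0 ≤ k ≤ n`, the sum is, up to the sign `(-1)^n`, the `n`-th finite difference of the polynomial
`(n - 2x)^(q-1)`, of degree `q - 1 < n`, hence zero. Since `n + q - 1` is even, the reflection
`k ↦ n - k` preserves the summand, and the middle term `2k = n` vanishes, so the full sum is twice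
the sum over `2k < n`.
-/

open Finset Polynomial

theorem Polynomial.sum_range_neg_one_pow_mul_choose_mul_eval_eq_zero {R : Type*} [CommRing R]
    {P : R[X]} {n : ℕ} (hP : P.natDegree < n) :
    ∑ k ∈ range (n + 1), (-1 : R) ^ k * n.choose k * P.eval (k : R) = 0 := by
  have hdiff := congr_fun (P.fwdDiff_iter_eq_zero_of_degree_lt hP) 0
  rw [fwdDiff_iter_eq_sum_shift] at hdiff
  calc ∑ k ∈ range (n + 1), (-1 : R) ^ k * n.choose k * P.eval (k : R)
      = (-1) ^ n * ∑ k ∈ range (n + 1),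
          ((-1 : ℤ) ^ (n - k) * n.choose k) • P.eval (0 + k • 1) := by
        rw [mul_sum]
        refine sum_congr rfl fun k hk ↦ ?_
        have hsign : (-1 : R) ^ k = (-1) ^ n * (-1) ^ (n - k) := by
          rw [← pow_add]
          exact neg_one_pow_congr (by grind)
        rw [hsign, zsmul_eq_mul, nsmul_one, zero_add]
        push_cast
        ring
    _ = 0 := by rw [hdiff, Pi.zero_apply, mul_zero]

theorem Finset.sum_range_succ_eq_two_nsmul_of_reflect {M : Type*} [AddCommMonoid M] {n : ℕ}
    {g : ℕ → M} (hreflect : ∀ k ≤ n, g (n - k) = g k) (hmid : ∀ k, 2 * k = n → g k = 0) :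
    ∑ k ∈ range (n + 1), g k = 2 • ∑ k ∈ range ((n + 1) / 2), g k := by
  set H := (n + 1) / 2
  have hupper : ∑ k ∈ Ico H (n + 1), g k = ∑ k ∈ range (n + 1 - H), g k :=
    sum_nbij' (n - ·) (n - ·) (fun k hk ↦ by grind) (fun k hk ↦ by grind) (fun k hk ↦ by grind)
      (fun k hk ↦ by grind) (fun k hk ↦ (hreflect k (by grind)).symm)
  have hcentre : ∑ k ∈ Ico H (n + 1 - H), g k = 0 :=
    sum_eq_zero fun k hk ↦ hmid k (by grind)
  rw [← sum_range_add_sum_Ico g (by omega : H ≤ n + 1), hupper,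
    ← sum_range_add_sum_Ico g (by omega : H ≤ n + 1 - H), hcentre, add_zero, two_nsmul]

theorem neg_one_pow_mul_choose_mul_sub_two_mul_pow_reflect {R : Type*} [CommRing R]
    {n m k : ℕ} (hk : k ≤ n) (hnm : Even (n + m)) :
    (-1 : R) ^ (n - k) * n.choose (n - k) * ((n : R) - 2 * (n - k : ℕ)) ^ m
      = (-1) ^ k * n.choose k * ((n : R) - 2 * k) ^ m := by
  have hsign : (-1 : R) ^ (n - k) * (-1) ^ m = (-1) ^ k := by
    rw [← pow_add]
    exact neg_one_pow_congr (by grind)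
  rw [Nat.choose_symm hk, Nat.cast_sub hk, ← hsign,
    show (n : R) - 2 * (n - k) = -1 * (n - 2 * k) by ring, mul_pow]
  ring

theorem alternating_binomial_sum_eq_zero (n q : ℕ) (hq : 2 ≤ q) (hqn : q + 1 ≤ n)
    (hodd : Odd (n + q)) :
    ∑ k ∈ Finset.range ((n - 1) / 2 + 1),
      (-1 : ℤ) ^ k * (n.choose k : ℤ) * ((n : ℤ) - 2 * k) ^ (q - 1) = 0 := by
  set g : ℕ → ℤ := fun k ↦ (-1 : ℤ) ^ k * (n.choose k : ℤ) * ((n : ℤ) - 2 * k) ^ (q - 1)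
  have hfull : ∑ k ∈ range (n + 1), g k = 0 := by
    have hlin : (C (n : ℤ) - 2 * X).natDegree ≤ 1 := by compute_degree
    have hdeg : ((C (n : ℤ) - 2 * X) ^ (q - 1)).natDegree < n :=
      (natDegree_pow_le_of_le _ hlin).trans_lt (by omega)
    simpa [g] using sum_range_neg_one_pow_mul_choose_mul_eval_eq_zero hdeg
  have hreflect : ∀ k ≤ n, g (n - k) = g k := fun k hk ↦
    neg_one_pow_mul_choose_mul_sub_two_mul_pow_reflect hk (by grind)
  have hmid : ∀ k, 2 * k = n → g k = 0 := fun k hk ↦ by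
    simp [g, ← hk, zero_pow (by omega : q - 1 ≠ 0)]
  rw [sum_range_succ_eq_two_nsmul_of_reflect hreflect hmid, two_nsmul, ← two_mul] at hfull
  rw [show (n - 1) / 2 + 1 = (n + 1) / 2 by omega]
  simpa using hfull
end

section
/- For q = 1 and any nonzero real α, ∫_ε^∞ e^{iαx}/x dx = E_ε(α), i.e., the formula of the key lemma holds with c_1 = 0 and remainder zero; more generally, for every integer q ≥ 1, every ε > 0, and every nonzero real α, ∫_ε^∞ (e^{iαx} − P_{q-2}(iαx))/x^q dx = c_q α^{q-1} + (iα)^{q-1}/(q-1)! · E_ε(α) + ω_q(ε, α), where ω_q(ε, α) → 0 as ε → 0⁺, c_q = i^{q-1}/(q-1)! · Σ_{k=0}^{q-2} 1/(k+1) for q ≥ 2 and c_1 = 0. -/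
open Filter Finset Complex

/-- `P m z = ∑_{k=0}^{m-1} z^k/k!`; thus `P (m+1)` is the Maclaurin polynomial of `exp`
of order `m`, and `P 0 = 0` encodes the convention `P_{-1} = 0`. -/
noncomputable def P (m : ℕ) (z : ℂ) : ℂ := ∑ k ∈ Finset.range m, z ^ k / (k.factorial : ℂ)

noncomputable def c (q : ℕ) : ℂ :=
  Complex.I ^ (q - 1) / ((q - 1).factorial : ℂ) * ∑ k ∈ Finset.range (q - 1), 1 / ((k : ℂ) + 1)

/-!
Write `T_{m,k}(x) = (e^{ax} - P_m(ax)) / x^k` with `Re a ≤ 0`. Since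
`T_{m+1,k}' = a T_{m,k} - k T_{m+1,k+1}`, integrating by parts over `[ε, R]` and letting
`R → ∞` (where `T_{n+1,n+1}(R) → 0`) gives `(n+1) J_{n+1}(ε) = a J_n(ε) + T_{n+1,n+1}(ε)`
for `J_n(ε) = ∫_ε^∞ T_{n,n+1}`. By Taylor's theorem `T_{n+1,n+1}(ε) → a^{n+1}/(n+1)!` as
`ε → 0⁺`, so induction from `J_0 = E` yields `J_n(ε) = a^n/n! (H_n + E(ε)) + o(1)` with `H_n`
the harmonic number. For `a = iα` this is the claim, because `c_{n+1} α^n = (iα)^n/n! H_n`.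
-/

open Asymptotics Bornology Topology

lemma P_succ (m : ℕ) (z : ℂ) : P (m + 1) z = P m z + z ^ m / m.factorial :=
  Finset.sum_range_succ _ _

lemma continuous_P (m : ℕ) : Continuous (P m) := by
  unfold P; fun_prop

lemma hasDerivAt_P_succ (m : ℕ) (z : ℂ) : HasDerivAt (P (m + 1)) (P m z) z := by
  induction m with
  | zero =>
    rw [show P 1 = fun _ => 1 from funext fun w => by simp [P]]
    simpa [P] using hasDerivAt_const z (1 : ℂ)
  | succ m ih =>
    have hpow : HasDerivAt (fun w : ℂ => w ^ (m + 1) / (m + 1).factorial)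
        (z ^ m / m.factorial) z := by
      refine ((hasDerivAt_pow (m + 1) z).div_const ((m + 1).factorial : ℂ)).congr_deriv ?_
      rw [Nat.factorial_succ]; push_cast
      field_simp
    rw [show P (m + 2) = fun w => P (m + 1) w + w ^ (m + 1) / (m + 1).factorial from
      funext fun w => P_succ _ w, P_succ]
    exact ih.add hpow

lemma hasDerivAt_exp_sub_P (a : ℂ) (m : ℕ) (z : ℂ) :
    HasDerivAt (fun z => exp (a * z) - P (m + 1) (a * z)) (a * (exp (a * z) - P m (a * z))) z := by
  have hlin : HasDerivAt (fun z => a * z) a z := by simpa using (hasDerivAt_id z).const_mul a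
  refine (hlin.cexp.sub ((hasDerivAt_P_succ m (a * z)).comp z hlin)).congr_deriv ?_
  ring

noncomputable def expTail (a : ℂ) (m k : ℕ) (z : ℂ) : ℂ := (exp (a * z) - P m (a * z)) / z ^ k

lemma continuousOn_expTail (a : ℂ) (m k : ℕ) : ContinuousOn (expTail a m k) {0}ᶜ :=
  ((continuous_const_mul a).cexp.sub ((continuous_P m).comp (continuous_const_mul a))).continuousOn
    |>.div (continuous_pow k).continuousOn fun _ hz => pow_ne_zero k hz

lemma hasDerivAt_expTail (a : ℂ) (m k : ℕ) {z : ℂ} (hz : z ≠ 0) :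
    HasDerivAt (expTail a (m + 1) k) (a * expTail a m k z - k * expTail a (m + 1) (k + 1) z) z := by
  refine ((hasDerivAt_exp_sub_P a m z).div (hasDerivAt_pow k z) (pow_ne_zero k hz)).congr_deriv ?_
  rcases k with _ | k
  · simp [expTail]
  · simp only [expTail, Nat.add_sub_cancel]
    field_simp
    ring

lemma tendsto_expTail_atTop {a : ℂ} (ha : a.re ≤ 0) (n : ℕ) :
    Tendsto (fun x : ℝ => expTail a (n + 1) (n + 1) x) atTop (𝓝 0) := by
  have hcob := RCLike.tendsto_ofReal_atTop_cobounded ℂ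
  have hexp : (fun x : ℝ => exp (a * x)) =O[atTop] (fun x : ℝ => (x : ℂ) ^ n) := by
    have h1 : (fun x : ℝ => exp (a * x)) =O[atTop] (fun _ => (1 : ℂ)) := by
      refine isBigO_iff.2 ⟨1, ?_⟩
      filter_upwards [eventually_ge_atTop 0] with x hx
      simpa [norm_exp] using mul_nonpos_of_nonpos_of_nonneg ha hx
    have h2 : (fun _ : ℝ => (1 : ℂ)) =O[atTop] (fun x : ℝ => (x : ℂ) ^ n) :=
      (isBigO_pow_pow_cobounded_of_le (R := ℂ) (Nat.zero_le n)).comp_tendsto hcob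
    exact h1.trans h2
  have hP : (fun z : ℂ => P (n + 1) (a * z)) =O[cobounded ℂ] (· ^ n) := by
    unfold P
    refine IsBigO.fun_sum fun k hk => ?_
    have hkn : k ≤ n := Nat.lt_succ_iff.1 (mem_range.1 hk)
    refine ((isBigO_pow_pow_cobounded_of_le (R := ℂ) hkn).const_mul_left (a ^ k / k.factorial))
      |>.congr_left fun z => ?_
    ring
  have ho := (hexp.sub (hP.comp_tendsto hcob)).trans_isLittleO
    ((isLittleO_pow_pow_cobounded_of_lt (R := ℂ) n.lt_succ_self).comp_tendsto hcob)
  exact ho.tendsto_div_nhds_zero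

lemma tendsto_expTail_nhdsNE (a : ℂ) (n : ℕ) :
    Tendsto (expTail a n n) (𝓝[≠] 0) (𝓝 (a ^ n / n.factorial)) := by
  have ho : (fun z => exp (a * z) - P (n + 1) (a * z)) =o[𝓝 0] (fun z => z ^ n) :=
    ((exp_sub_sum_range_succ_isLittleO_pow n).comp_tendsto
      ((continuous_const_mul a).tendsto' 0 0 (mul_zero a))).trans_isBigO
      (((isBigO_refl (fun z : ℂ => z ^ n) _).const_mul_left (a ^ n)).congr_left
        fun z => (mul_pow a z n).symm)
  have hlim := (ho.tendsto_div_nhds_zero.mono_left (nhdsWithin_le_nhds (s := {0}ᶜ))).add_const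
    (a ^ n / n.factorial)
  rw [zero_add] at hlim
  refine hlim.congr' (eventually_nhdsWithin_of_forall fun z hz => ?_)
  simp only [expTail, P_succ, mul_pow]
  field_simp [pow_ne_zero n (show z ≠ 0 from hz)]
  ring

lemma intervalIntegrable_expTail (a : ℂ) (m k : ℕ) {ε R : ℝ} (h : (0 : ℝ) ∉ Set.uIcc ε R) :
    IntervalIntegrable (fun x : ℝ => expTail a m k x) MeasureTheory.volume ε R :=
  ((continuousOn_expTail a m k).comp continuous_ofReal.continuousOn fun _ hx =>
    ofReal_ne_zero.2 fun h0 => h (h0 ▸ hx)).intervalIntegrable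

lemma integral_expTail_succ (a : ℂ) (m k : ℕ) {ε R : ℝ} (h : (0 : ℝ) ∉ Set.uIcc ε R) :
    k * ∫ x in ε..R, expTail a (m + 1) (k + 1) x
      = a * (∫ x in ε..R, expTail a m k x) + expTail a (m + 1) k ε - expTail a (m + 1) k R := by
  have hderiv := intervalIntegral.integral_eq_sub_of_hasDerivAt
    (fun x hx => (hasDerivAt_expTail a m k
      (ofReal_ne_zero.2 fun h0 => h (h0 ▸ hx))).comp_ofReal)
    (((intervalIntegrable_expTail a m k h).const_mul a).sub
      ((intervalIntegrable_expTail a (m + 1) (k + 1) h).const_mul k))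
  rw [intervalIntegral.integral_sub ((intervalIntegrable_expTail a m k h).const_mul a)
      ((intervalIntegrable_expTail a (m + 1) (k + 1) h).const_mul k),
    intervalIntegral.integral_const_mul, intervalIntegral.integral_const_mul] at hderiv
  linear_combination -hderiv

lemma tendsto_integral_expTail_succ {a : ℂ} (ha : a.re ≤ 0) (n : ℕ) {ε : ℝ} (hε : 0 < ε) {L : ℂ}
    (h : Tendsto (fun R => ∫ x in ε..R, expTail a n (n + 1) x) atTop (𝓝 L)) :
    Tendsto (fun R => ∫ x in ε..R, expTail a (n + 1) (n + 2) x) atTop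
      (𝓝 ((a * L + expTail a (n + 1) (n + 1) ε) / (n + 1))) := by
  have hlim := (((h.const_mul a).add_const (expTail a (n + 1) (n + 1) ε)).sub
    (tendsto_expTail_atTop ha n)).div_const ((n : ℂ) + 1)
  rw [sub_zero] at hlim
  refine hlim.congr' ?_
  filter_upwards [eventually_ge_atTop ε] with R hR
  have h0 : (0 : ℝ) ∉ Set.uIcc ε R := by
    rw [Set.uIcc_of_le hR]; exact fun h0 => hε.not_ge h0.1
  have hibp := integral_expTail_succ a n (n + 1) h0
  push_cast at hibp
  rw [div_eq_iff (Nat.cast_add_one_ne_zero n)]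
  linear_combination -hibp

lemma tendsto_ofReal_nhdsGT_nhdsNE : Tendsto ((↑) : ℝ → ℂ) (𝓝[>] 0) (𝓝[≠] 0) := by
  simpa using continuous_ofReal.continuousWithinAt.tendsto_nhdsWithin (s := Set.Ioi 0) (x := 0)
    fun _ hx => ofReal_ne_zero.2 (ne_of_gt hx)

theorem exists_tendsto_integral_expTail {a : ℂ} (ha : a.re ≤ 0) {E : ℝ → ℂ}
    (hE : ∀ ε : ℝ, 0 < ε →
      Tendsto (fun R : ℝ => ∫ x in ε..R, exp (a * x) / (x : ℂ)) atTop (𝓝 (E ε)))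
    (n : ℕ) :
    ∃ J : ℝ → ℂ,
      (∀ ε : ℝ, 0 < ε →
        Tendsto (fun R : ℝ => ∫ x in ε..R, expTail a n (n + 1) x) atTop (𝓝 (J ε))) ∧
      Tendsto (fun ε => J ε - a ^ n / n.factorial * (harmonic n + E ε)) (𝓝[>] 0) (𝓝 0) := by
  induction n with
  | zero =>
    refine ⟨E, fun ε hε => by simpa [expTail, P] using hE ε hε, ?_⟩
    simp
  | succ n ih =>
    obtain ⟨J, hJ, hJE⟩ := ih
    refine ⟨fun ε => (a * J ε + expTail a (n + 1) (n + 1) ε) / (n + 1),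
      fun ε hε => by exact_mod_cast tendsto_integral_expTail_succ ha n hε (hJ ε hε), ?_⟩
    have hT := ((tendsto_expTail_nhdsNE a (n + 1)).comp tendsto_ofReal_nhdsGT_nhdsNE).sub_const
      (a ^ (n + 1) / (n + 1).factorial)
    rw [sub_self] at hT
    have hlim := ((hJE.const_mul a).add hT).div_const ((n : ℂ) + 1)
    rw [mul_zero, add_zero, zero_div] at hlim
    refine hlim.congr fun ε => ?_
    simp only [Function.comp_apply, harmonic_succ, Nat.factorial_succ]
    push_cast
    field_simp
    ring

lemma c_succ_mul_pow (α : ℝ) (n : ℕ) :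
    c (n + 1) * (α : ℂ) ^ n = (I * α) ^ n / n.factorial * harmonic n := by
  simp only [c, harmonic, Nat.add_sub_cancel, mul_pow]
  push_cast
  simp only [one_div]
  ring

theorem key_lemma_general (q : ℕ) (hq : 1 ≤ q) (α : ℝ) (E J : ℝ → ℂ)
    (hE : ∀ ε : ℝ, 0 < ε →
      Tendsto (fun R : ℝ => ∫ x in ε..R, Complex.exp (Complex.I * α * x) / (x : ℂ))
        atTop (nhds (E ε)))
    (hJ : ∀ ε : ℝ, 0 < ε →
      Tendsto (fun R : ℝ => ∫ x in ε..R,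
          (Complex.exp (Complex.I * α * x) - P (q - 1) (Complex.I * α * x)) / (x : ℂ) ^ q)
        atTop (nhds (J ε))) :
    ∃ ω : ℝ → ℂ, Tendsto ω (nhdsWithin 0 (Set.Ioi 0)) (nhds 0) ∧
      ∀ ε : ℝ, 0 < ε →
        J ε = c q * (α : ℂ) ^ (q - 1)
            + (Complex.I * α) ^ (q - 1) / ((q - 1).factorial : ℂ) * E ε + ω ε := by
  obtain ⟨n, rfl⟩ := Nat.exists_eq_add_of_le' hq
  simp only [Nat.add_sub_cancel] at hJ ⊢
  obtain ⟨J', hJ', hlim⟩ := exists_tendsto_integral_expTail (by simp) hE n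
  refine ⟨fun ε => J ε - c (n + 1) * α ^ n - (I * α) ^ n / n.factorial * E ε, ?_,
    fun ε _ => by ring⟩
  refine hlim.congr' (eventually_nhdsWithin_of_forall fun ε (hε : 0 < ε) => ?_)
  rw [tendsto_nhds_unique (hJ' ε hε) (hJ ε hε), c_succ_mul_pow]
  ring

/-- Key lemma: if `E ε = ∫_ε^∞ e^{iαx}/x dx` and
`J ε = ∫_ε^∞ (e^{iαx} − P_{q-2}(iαx))/x^q dx` (both as improper integrals, i.e. limits of
`∫_ε^R` as `R → ∞`), then `J ε = c_q α^{q-1} + (iα)^{q-1}/(q-1)! ⬝ E ε + ω ε` with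
`ω ε → 0` as `ε → 0⁺`.  In particular for `q = 1` one has `c_1 = 0` and `ω = 0` may be taken,
i.e. `J ε = E ε`. -/
theorem key_lemma (q : ℕ) (hq : 1 ≤ q) (α : ℝ) (hα : α ≠ 0) (E J : ℝ → ℂ)
    (hE : ∀ ε : ℝ, 0 < ε →
      Tendsto (fun R : ℝ => ∫ x in ε..R, Complex.exp (Complex.I * α * x) / (x : ℂ))
        atTop (nhds (E ε)))
    (hJ : ∀ ε : ℝ, 0 < ε →
      Tendsto (fun R : ℝ => ∫ x in ε..R,
          (Complex.exp (Complex.I * α * x) - P (q - 1) (Complex.I * α * x)) / (x : ℂ) ^ q)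
        atTop (nhds (J ε))) :
    ∃ ω : ℝ → ℂ, Tendsto ω (nhdsWithin 0 (Set.Ioi 0)) (nhds 0) ∧
      ∀ ε : ℝ, 0 < ε →
        J ε = c q * (α : ℂ) ^ (q - 1)
            + (Complex.I * α) ^ (q - 1) / ((q - 1).factorial : ℂ) * E ε + ω ε :=
  key_lemma_general q hq α E J hE hJ
end

section
/- ∫_0^∞ sin(x)^4 / x^3 dx = log 2. -/
/-!
Since sin⁴ x = (3 − 4 cos 2x + cos 4x)/8, integrating sin⁴ x / x³ by parts twice leaves
boundary terms that vanish at 0 and at ∞, plus the Frullani integral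
∫ (cos 2x − cos 4x)/x = log 2. Truncated to [ε, r], the latter is
∫_{2ε}^{4ε} cos u/u − ∫_{2r}^{4r} cos u/u; the first piece tends to cos 0 · log (4/2), the
second is O(1/r) after one more integration by parts.
-/

open Real Set Filter MeasureTheory Topology

/-- The boundary term left by integrating `sin x ^ 4 / x ^ 3` by parts twice. -/
noncomputable def sinFourthPrimitive (x : ℝ) : ℝ :=
  -(sin x ^ 4 / (2 * x ^ 2)) - 2 * sin x ^ 3 * cos x / x

lemma cos_two_mul_sub_cos_four_mul (x : ℝ) :
    cos (2 * x) - cos (4 * x) = 6 * sin x ^ 2 * cos x ^ 2 - 2 * sin x ^ 4 := by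
  have h4 : cos (4 * x) = 2 * cos (2 * x) ^ 2 - 1 := by
    rw [show 4 * x = 2 * (2 * x) by ring, cos_two_mul]
  rw [h4, cos_two_mul]
  linear_combination (2 + 2 * sin x ^ 2 - 8 * cos x ^ 2) * sin_sq_add_cos_sq x

lemma hasDerivAt_sinFourthPrimitive {x : ℝ} (hx : x ≠ 0) :
    HasDerivAt sinFourthPrimitive
      (sin x ^ 4 / x ^ 3 - x⁻¹ * (cos (2 * x) - cos (4 * x))) x := by
  have h := (((hasDerivAt_sin x).fun_pow 4).fun_div ((hasDerivAt_pow 2 x).const_mul 2)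
    (by positivity)).fun_neg.fun_sub
    ((((hasDerivAt_sin x).fun_pow 3).const_mul 2 |>.fun_mul (hasDerivAt_cos x)).fun_div
      (hasDerivAt_id' x) hx)
  refine h.congr_deriv ?_
  rw [cos_two_mul_sub_cos_four_mul]
  field_simp
  ring

lemma abs_sinFourthPrimitive_le (x : ℝ) :
    |sinFourthPrimitive x| ≤ |sin x| ^ 4 / (2 * x ^ 2) + 2 * |sin x| ^ 3 / |x| := by
  have hcos : |2 * sin x ^ 3 * cos x / x| ≤ 2 * |sin x| ^ 3 / |x| := by
    rw [abs_div, abs_mul, abs_mul, abs_pow, abs_two]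
    gcongr ?_ / _
    exact mul_le_of_le_one_right (by positivity) (abs_cos_le_one x)
  calc |sinFourthPrimitive x|
      ≤ |sin x ^ 4 / (2 * x ^ 2)| + |2 * sin x ^ 3 * cos x / x| := by
        rw [sinFourthPrimitive, ← abs_neg (sin x ^ 4 / _)]
        exact abs_sub _ _
    _ ≤ _ := by
        rw [abs_div, abs_pow, abs_of_nonneg (by positivity : (0 : ℝ) ≤ 2 * x ^ 2)]
        gcongr

lemma tendsto_sinFourthPrimitive_atTop : Tendsto sinFourthPrimitive atTop (𝓝 0) := by
  have hbound : Tendsto (fun x : ℝ => 1 / (2 * x ^ 2) + 2 / x) atTop (𝓝 0) := by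
    simpa using ((tendsto_const_nhds (x := (1 : ℝ))).div_atTop
      ((tendsto_pow_atTop two_ne_zero).const_mul_atTop (two_pos : (0 : ℝ) < 2))).add
      ((tendsto_const_nhds (x := (2 : ℝ))).div_atTop tendsto_id)
  refine squeeze_zero_norm' ?_ hbound
  filter_upwards [eventually_gt_atTop 0] with x hx
  refine (abs_sinFourthPrimitive_le x).trans ?_
  rw [abs_of_pos hx]
  have h4 : |sin x| ^ 4 ≤ 1 := pow_le_one₀ (abs_nonneg _) (abs_sin_le_one x)
  have h3 : |sin x| ^ 3 ≤ 1 := pow_le_one₀ (abs_nonneg _) (abs_sin_le_one x)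
  gcongr
  linarith

lemma tendsto_sinFourthPrimitive_nhdsGT_zero :
    Tendsto sinFourthPrimitive (𝓝[>] 0) (𝓝 0) := by
  have hbound : Tendsto (fun x : ℝ => 5 / 2 * x ^ 2) (𝓝[>] 0) (𝓝 0) :=
    tendsto_nhdsWithin_of_tendsto_nhds <| by
      simpa using ((continuous_pow 2).tendsto (0 : ℝ)).const_mul (5 / 2)
  refine squeeze_zero_norm' ?_ hbound
  filter_upwards [self_mem_nhdsWithin] with x (hx : 0 < x)
  refine (abs_sinFourthPrimitive_le x).trans ?_
  have := abs_sin_le_abs (x := x)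
  calc _ ≤ |x| ^ 4 / (2 * x ^ 2) + 2 * |x| ^ 3 / |x| := by gcongr
    _ = 5 / 2 * x ^ 2 := by
        rw [abs_of_pos hx]
        field_simp
        ring

lemma abs_integral_inv_mul_cos_le {a b : ℝ} (ha : 0 < a) (hab : a ≤ b) :
    |∫ x in a..b, x⁻¹ * cos x| ≤ 2 / a := by
  have hpos : ∀ x ∈ uIcc a b, 0 < x := fun x hx => ha.trans_le (uIcc_of_le hab ▸ hx).1
  have hinv : ∀ x ∈ uIcc a b, HasDerivAt (·⁻¹) (-(x ^ 2)⁻¹) x :=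
    fun x hx => hasDerivAt_inv (hpos x hx).ne'
  have hsq : IntervalIntegrable (fun x : ℝ => (x ^ 2)⁻¹) volume a b :=
    (continuousOn_inv₀.comp (continuous_pow 2).continuousOn
      fun x hx => pow_ne_zero 2 (hpos x hx).ne').intervalIntegrable
  have ibp : ∫ x in a..b, x⁻¹ * cos x
      = b⁻¹ * sin b - a⁻¹ * sin a - ∫ x in a..b, -(x ^ 2)⁻¹ * sin x :=
    intervalIntegral.integral_mul_deriv_eq_deriv_mul hinv (fun x _ => hasDerivAt_sin x)
      hsq.neg (continuous_cos.intervalIntegrable a b)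
  have htail : |∫ x in a..b, -(x ^ 2)⁻¹ * sin x| ≤ a⁻¹ - b⁻¹ := by
    have hle (x : ℝ) : ‖-(x ^ 2)⁻¹ * sin x‖ ≤ (x ^ 2)⁻¹ := by
      rw [norm_mul, norm_neg, norm_inv, norm_pow, Real.norm_eq_abs, sq_abs]
      exact mul_le_of_le_one_right (by positivity) (abs_sin_le_one x)
    calc _ ≤ ∫ x in a..b, (x ^ 2)⁻¹ :=
          intervalIntegral.norm_integral_le_of_norm_le hab (ae_of_all _ fun x _ => hle x) hsq
      _ = a⁻¹ - b⁻¹ := by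
          rw [← neg_sub, ← intervalIntegral.integral_eq_sub_of_hasDerivAt hinv hsq.neg,
            intervalIntegral.integral_neg, neg_neg]
  have hsin_b : |b⁻¹ * sin b| ≤ b⁻¹ := by
    rw [abs_mul, abs_inv, abs_of_pos (ha.trans_le hab)]
    exact mul_le_of_le_one_right (inv_pos.2 (ha.trans_le hab)).le (abs_sin_le_one b)
  have hsin_a : |a⁻¹ * sin a| ≤ a⁻¹ := by
    rw [abs_mul, abs_inv, abs_of_pos ha]
    exact mul_le_of_le_one_right (by positivity) (abs_sin_le_one a)
  rw [ibp, div_eq_mul_inv]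
  linarith [abs_sub (b⁻¹ * sin b - a⁻¹ * sin a) (∫ x in a..b, -(x ^ 2)⁻¹ * sin x),
    abs_sub (b⁻¹ * sin b) (a⁻¹ * sin a)]

lemma tendsto_integral_inv_mul_cos_atTop {p q : ℝ} (hp : 0 < p) (hpq : p ≤ q) :
    Tendsto (fun r => ∫ x in p * r..q * r, x⁻¹ * cos x) atTop (𝓝 0) := by
  refine squeeze_zero_norm' ?_ ((tendsto_const_nhds (x := (2 : ℝ))).div_atTop
    (tendsto_id.const_mul_atTop hp))
  filter_upwards [eventually_gt_atTop 0] with r hr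
  exact abs_integral_inv_mul_cos_le (mul_pos hp hr) (by gcongr)

lemma tendsto_integral_inv_mul_cos_nhdsGT_zero {p q : ℝ} (hp : 0 < p) (hq : 0 < q) :
    Tendsto (fun ε => ∫ x in p * ε..q * ε, x⁻¹ * cos x) (𝓝[>] 0) (𝓝 (log (q / p))) := by
  simpa using Frullani.tendsto_integral_inv_smul_nhdsWithin
    (continuous_cos.continuousOn.locallyIntegrableOn measurableSet_Ioi) hp hq
    ((continuous_cos.tendsto' 0 1 cos_zero).mono_left nhdsWithin_le_nhds)

lemma integral_inv_smul_sub_comp_mul {E : Type*} [NormedAddCommGroup E] [NormedSpace ℝ E]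
    {f : ℝ → E} (hf : LocallyIntegrableOn f (Ioi 0)) {p q ε r : ℝ} (hp : 0 < p) (hq : 0 < q)
    (hε : 0 < ε) (hr : 0 < r) :
    ∫ x in ε..r, x⁻¹ • (f (p * x) - f (q * x)) =
      (∫ x in p * ε..q * ε, x⁻¹ • f x) - ∫ x in p * r..q * r, x⁻¹ • f x := by
  have hint {a b : ℝ} (ha : 0 < a) (hb : 0 < b) :
      IntervalIntegrable (fun x ↦ x⁻¹ • f x) volume a b :=
    Frullani.intervalIntegrable_inv_smul hf ha hb
  simp_rw [smul_sub]
  rw [intervalIntegral.integral_sub (Frullani.intervalIntegrable_inv_smul_comp_mul hf hε hr hp)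
      (Frullani.intervalIntegrable_inv_smul_comp_mul hf hε hr hq),
    Frullani.integral_comp_mul_inv_smul hp.ne', Frullani.integral_comp_mul_inv_smul hq.ne']
  exact intervalIntegral.integral_interval_sub_interval_comm (hint (by positivity) (by positivity))
    (hint (by positivity) (by positivity)) (hint (by positivity) (by positivity))

lemma integral_sin_pow_four_div_pow_three_eq {ε r : ℝ} (hε : 0 < ε) (hr : 0 < r) :
    ∫ x in ε..r, sin x ^ 4 / x ^ 3 =
      sinFourthPrimitive r - sinFourthPrimitive ε +
        ((∫ x in 2 * ε..4 * ε, x⁻¹ * cos x) - ∫ x in 2 * r..4 * r, x⁻¹ * cos x) := by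
  have hne : ∀ x ∈ uIcc ε r, x ≠ 0 := fun x hx =>
    (lt_of_lt_of_le (lt_min hε hr) hx.1).ne'
  have hf : IntervalIntegrable (fun x => sin x ^ 4 / x ^ 3) volume ε r :=
    (ContinuousOn.div (by fun_prop) (by fun_prop)
      fun x hx => pow_ne_zero 3 (hne x hx)).intervalIntegrable
  have hg : IntervalIntegrable (fun x => x⁻¹ * (cos (2 * x) - cos (4 * x))) volume ε r :=
    ((continuousOn_inv₀.mono hne).mul (by fun_prop)).intervalIntegrable
  have hftc := intervalIntegral.integral_eq_sub_of_hasDerivAt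
    (fun x hx => hasDerivAt_sinFourthPrimitive (hne x hx)) (hf.sub hg)
  have hfrullani := integral_inv_smul_sub_comp_mul
    (continuous_cos.continuousOn.locallyIntegrableOn measurableSet_Ioi) two_pos four_pos hε hr
  simp only [smul_eq_mul] at hfrullani
  rw [intervalIntegral.integral_sub hf hg, hfrullani] at hftc
  linarith

lemma integrableOn_sin_pow_four_div_pow_three :
    IntegrableOn (fun x => sin x ^ 4 / x ^ 3) (Ioi 0) := by
  have hmeas : AEStronglyMeasurable (fun x => sin x ^ 4 / x ^ 3) :=
    (by fun_prop : Measurable fun x => sin x ^ 4 / x ^ 3).aestronglyMeasurable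
  rw [← Ioc_union_Ioi_eq_Ioi zero_le_one]
  refine IntegrableOn.union ?_ ?_
  · refine Measure.integrableOn_of_bounded (M := 1) measure_Ioc_lt_top.ne hmeas ?_
    filter_upwards [ae_restrict_mem measurableSet_Ioc] with x ⟨hx0, hx1⟩
    have hsin : 0 ≤ sin x :=
      sin_nonneg_of_nonneg_of_le_pi hx0.le (hx1.trans (by linarith [pi_gt_three]))
    calc ‖sin x ^ 4 / x ^ 3‖ = sin x ^ 4 / x ^ 3 := norm_of_nonneg (by positivity)
      _ ≤ x ^ 4 / x ^ 3 := by gcongr; exact sin_le hx0.le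
      _ = x := by field_simp
      _ ≤ 1 := hx1
  · refine (integrableOn_Ioi_rpow_of_lt (by norm_num : (-3 : ℝ) < -1) one_pos).mono'
      hmeas.restrict ?_
    filter_upwards [ae_restrict_mem measurableSet_Ioi] with x (hx : 1 < x)
    rw [rpow_neg (by positivity), rpow_ofNat, norm_div, norm_pow, Real.norm_eq_abs,
      norm_of_nonneg (by positivity), div_eq_mul_inv]
    exact mul_le_of_le_one_left (by positivity) (pow_le_one₀ (abs_nonneg _) (abs_sin_le_one x))

theorem integral_sin_fourth_div_cube :
    ∫ x in Set.Ioi (0:ℝ), Real.sin x ^ 4 / x ^ 3 = Real.log 2 := by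
  have hcover : AECover (volume.restrict (Ioi 0)) atTop fun r : ℝ => Ioc r⁻¹ r :=
    (aecover_Ioi_of_Ioi tendsto_inv_atTop_zero).inter (aecover_Iic tendsto_id)
  refine hcover.integral_eq_of_tendsto _ integrableOn_sin_pow_four_div_pow_three ?_
  have hsplit : ∀ᶠ r in atTop, sinFourthPrimitive r - sinFourthPrimitive r⁻¹ +
      ((∫ x in 2 * r⁻¹..4 * r⁻¹, x⁻¹ * cos x) - ∫ x in 2 * r..4 * r, x⁻¹ * cos x) =
      ∫ x in Ioc r⁻¹ r, sin x ^ 4 / x ^ 3 ∂volume.restrict (Ioi 0) := by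
    filter_upwards [eventually_ge_atTop 1] with r hr
    have hr0 : 0 < r := one_pos.trans_le hr
    rw [Measure.restrict_restrict measurableSet_Ioc,
      inter_eq_self_of_subset_left (Ioc_subset_Ioi_self.trans (Ioi_subset_Ioi (inv_pos.2 hr0).le)),
      ← intervalIntegral.integral_of_le ((inv_le_one_of_one_le₀ hr).trans hr),
      integral_sin_pow_four_div_pow_three_eq (inv_pos.2 hr0) hr0]
  have hlim := (tendsto_sinFourthPrimitive_atTop.sub
    (tendsto_sinFourthPrimitive_nhdsGT_zero.comp tendsto_inv_atTop_nhdsGT_zero)).add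
    (((tendsto_integral_inv_mul_cos_nhdsGT_zero two_pos four_pos).comp
      tendsto_inv_atTop_nhdsGT_zero).sub
      (tendsto_integral_inv_mul_cos_atTop two_pos (by norm_num : (2 : ℝ) ≤ 4)))
  norm_num at hlim
  exact hlim.congr' hsplit
end
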